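/- arXiv:2404.19033 — 5 statements merged into one kernel-verified Lean document; each statement's English description precedes it below -/
import Mathlib

section
/- Every element of ker ad(f) is κ-orthogonal to 𝔪_l: for all y ∈ 𝔤 with ⁅f,y⁆ = 0 and all z ∈ 𝔪_l, one has κ(y,z) = 0. -/
/-!
If `⁅f, y⁆ = 0` and `c ∉ ℕ`, then `ad h + c` is injective on `ker (ad f)`, because a nonzero
vector killed by `f` has a nonpositive integer `h`-weight (it is primitive for the triple
`(-h, f, e)`). By finite dimensionality it is also surjective there, so `y = ⁅h, w⁆ + c • w`, and
invariance of `κ` gives `κ(y, x) = (c - c) κ(w, x) = 0` for every `x ∈ 𝔤_c`. Every `𝔤ᵢ` with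
`i ≤ -1` is such an eigenspace, and `𝔪_l ⊆ 𝔤_{≤ -1}`.
-/


open LieAlgebra

variable {L : Type*} [LieRing L] [LieAlgebra ℂ L]

/-- The eigenspace `𝔤ᵢ` of `ad h` with eigenvalue `i ∈ ℤ`. -/
noncomputable def gEig (h : L) (i : ℤ) : Submodule ℂ L :=
  Module.End.eigenspace ((ad ℂ L h)) (i : ℂ)

/-- `𝔤_{≤k}`, the sum of the eigenspaces `𝔤ᵢ` for `i ≤ k`. -/
noncomputable def gLe (h : L) (k : ℤ) : Submodule ℂ L :=
  ⨆ i ∈ Set.Iic k, gEig h i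

/-- `l^{⊥ω} = {y ∈ 𝔤₋₁ : ω(x, y) = 0 for all x ∈ l}`, where `ω(x, y) = κ(⁅x, y⁆, e)`. -/
noncomputable def lPerpOmega (e h : L) (l : Submodule ℂ L) : Submodule ℂ L :=
  gEig h (-1) ⊓
    ⨅ x ∈ l, LinearMap.ker (((killingForm ℂ L).flip e).comp (ad ℂ L x))

/-- `𝔫_l = l + 𝔤_{≤ -2}`. -/
noncomputable def nSub (h : L) (l : Submodule ℂ L) : Submodule ℂ L :=
  l ⊔ gLe h (-2)

/-- `𝔪_l = l^{⊥ω} + 𝔤_{≤ -2}`. -/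
noncomputable def mSub (e h : L) (l : Submodule ℂ L) : Submodule ℂ L :=
  lPerpOmega e h l ⊔ gLe h (-2)

namespace IsSl2Triple

section CommRing

variable {R L M : Type*} [CommRing R] [LieRing L] [AddCommGroup M] [Module R M]
  [LieRingModule L M] {h e f : L}

lemma lie_f_lie_h_add_smul [LieAlgebra R L] [LieModule R L M] (t : IsSl2Triple h e f) (c : R)
    {w : M} (hf : ⁅f, w⁆ = 0) : ⁅f, ⁅h, w⁆ + c • w⁆ = 0 := by
  have hfh : ⁅f, h⁆ = 2 • f := by rw [← lie_skew, t.lie_h_f_nsmul, neg_neg]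
  simp only [lie_add, lie_smul, leibniz_lie, hfh, nsmul_lie, hf, lie_zero, smul_zero, add_zero]

lemma bilinForm_lie_h_add_smul_eq_zero {Φ : LinearMap.BilinForm R M} (hΦ : Φ.lieInvariant L)
    {c : R} (w : M) {x : M} (hx : ⁅h, x⁆ = c • x) : Φ (⁅h, w⁆ + c • w) x = 0 := by
  rw [map_add, LinearMap.add_apply, hΦ, hx, map_smul, map_smul, LinearMap.smul_apply]
  exact neg_add_cancel _

end CommRing

variable {K L M : Type*} [Field K] [CharZero K] [LieRing L] [LieAlgebra K L]
  [AddCommGroup M] [Module K M] [LieRingModule L M] [LieModule K L M] [Module.Finite K M]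
  {h e f : L}

lemma exists_nat_of_lie_f_eq_zero (t : IsSl2Triple h e f) {m : M} {μ : K} (hm : m ≠ 0)
    (hf : ⁅f, m⁆ = 0) (hh : ⁅h, m⁆ = -(μ • m)) : ∃ n : ℕ, μ = n :=
  HasPrimitiveVectorWith.exists_nat (t := t.symm) ⟨hm, by rw [neg_lie, hh, neg_neg], hf⟩

lemma exists_lie_h_add_smul_eq (t : IsSl2Triple h e f) {c : K} (hc : ∀ n : ℕ, c ≠ n) {m : M}
    (hm : ⁅f, m⁆ = 0) : ∃ w, ⁅h, w⁆ + c • w = m := by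
  let A : M →ₗ[K] M := LieModule.toEnd K L M h + c • LinearMap.id
  have hA : ∀ w ∈ LinearMap.ker (LieModule.toEnd K L M f),
      A w ∈ LinearMap.ker (LieModule.toEnd K L M f) :=
    fun w hw ↦ t.lie_f_lie_h_add_smul c hw
  have hinj : Function.Injective (A.restrict hA) := by
    rw [← LinearMap.ker_eq_bot, eq_bot_iff]
    rintro ⟨w, hwf⟩ hAw
    rw [Submodule.mem_bot, Submodule.mk_eq_zero]
    by_contra hw
    obtain ⟨n, rfl⟩ := t.exists_nat_of_lie_f_eq_zero hw hwf
      (eq_neg_of_add_eq_zero_left (congrArg Subtype.val hAw))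
    exact hc n rfl
  obtain ⟨⟨w, _⟩, hw⟩ := LinearMap.injective_iff_surjective.mp hinj ⟨m, hm⟩
  exact ⟨w, congrArg Subtype.val hw⟩

lemma bilinForm_eq_zero_of_lie_f_eq_zero (t : IsSl2Triple h e f) {Φ : LinearMap.BilinForm K M}
    (hΦ : Φ.lieInvariant L) {c : K} (hc : ∀ n : ℕ, c ≠ n) {y x : M} (hy : ⁅f, y⁆ = 0)
    (hx : ⁅h, x⁆ = c • x) : Φ y x = 0 := by
  obtain ⟨w, rfl⟩ := t.exists_lie_h_add_smul_eq hc hy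
  exact bilinForm_lie_h_add_smul_eq_zero hΦ w hx

end IsSl2Triple

lemma isSl2Triple_of_lie {e h f : L} (he : e ≠ 0) (hhe : ⁅h, e⁆ = (2 : ℂ) • e)
    (hhf : ⁅h, f⁆ = (-2 : ℂ) • f) (hef : ⁅e, f⁆ = h) : IsSl2Triple h e f where
  h_ne_zero := by
    rintro rfl
    exact he (by simpa using hhe.symm)
  lie_e_f := hef
  lie_h_e_nsmul := by rw [hhe, ofNat_smul_eq_nsmul]
  lie_h_f_nsmul := by rw [hhf, neg_smul, ofNat_smul_eq_nsmul]

lemma gEig_le_gLe (h : L) {i k : ℤ} (hik : i ≤ k) : gEig h i ≤ gLe h k :=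
  le_iSup₂ (f := fun j (_ : j ∈ Set.Iic k) ↦ gEig h j) i hik

lemma mSub_le_gLe (e h : L) (l : Submodule ℂ L) : mSub e h l ≤ gLe h (-1) :=
  sup_le (inf_le_left.trans (gEig_le_gLe h le_rfl))
    (iSup₂_le fun _ hi ↦ gEig_le_gLe h ((Set.mem_Iic.mp hi).trans (by norm_num)))

theorem stmt1_general {L : Type*} [LieRing L] [LieAlgebra ℂ L]
    [Module.Finite ℂ L]
    (e h f : L) (he : e ≠ 0)
    (hhe : ⁅h, e⁆ = (2 : ℂ) • e) (hhf : ⁅h, f⁆ = (-2 : ℂ) • f) (hef : ⁅e, f⁆ = h)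
    (l : Submodule ℂ L) :
    ∀ y : L, ⁅f, y⁆ = 0 → ∀ z ∈ mSub e h l, killingForm ℂ L y z = 0 := by
  intro y hy z hz
  have t := isSl2Triple_of_lie he hhe hhf hef
  have hκ : gLe h (-1) ≤ LinearMap.ker (killingForm ℂ L y) := by
    refine iSup₂_le fun i hi x hx ↦ ?_
    have hneg : ∀ n : ℕ, (i : ℂ) ≠ n := fun n hn ↦ by
      have hin : i = n := by exact_mod_cast hn
      have hi' : i ≤ -1 := hi
      omega
    exact t.bilinForm_eq_zero_of_lie_f_eq_zero (LieModule.traceForm_lieInvariant ℂ L L) hneg hy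
      (Module.End.mem_eigenspace_iff.mp hx)
  exact hκ (mSub_le_gLe e h l hz)

/-- Every element of `ker (ad f)` is `κ`-orthogonal to `𝔪_l`. -/
theorem stmt1 {L : Type*} [LieRing L] [LieAlgebra ℂ L]
    [Module.Finite ℂ L] [LieAlgebra.IsSemisimple ℂ L]
    (e h f : L) (he : e ≠ 0)
    (hhe : ⁅h, e⁆ = (2 : ℂ) • e) (hhf : ⁅h, f⁆ = (-2 : ℂ) • f) (hef : ⁅e, f⁆ = h)
    (l : Submodule ℂ L) (hl : l ≤ gEig h (-1))
    (hiso : ∀ x ∈ l, ∀ y ∈ l, killingForm ℂ L ⁅x, y⁆ e = 0) :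
    ∀ y : L, ⁅f, y⁆ = 0 → ∀ z ∈ mSub e h l, killingForm ℂ L y z = 0 :=
  stmt1_general e h f he hhe hhf hef l
end

section
/- For z', z ∈ V and v = z'⊗e₂ + z⊗e₁ ∈ V ⊗ ℂ², the following are equivalent: (a) ω(v, (A⊗id)(v)) = 0 for every A ∈ 𝔟 and ω(v, (id⊗B)(v)) = 0 for every B ∈ 𝔟₂; (b) ⟨z',z'⟩ = 0, ⟨z,z'⟩ = 0, and ⟨Az, z'⟩ = ⟨z, Az'⟩ for every A ∈ 𝔟. -/
/-!
Everything is read off two evaluations of `ω(v, ·)` at `v = z' ⊗ e₂ + z ⊗ e₁`: on `(A ⊗ id) v` it is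
`⟨z, Az'⟩ - ⟨z', Az⟩`, and on `(id ⊗ M) v` with `M` upper triangular it is
`-M₀₁⟨z',z'⟩ - M₀₀⟨z',z⟩ + M₁₁⟨z,z'⟩`. By symmetry of the form, `M = E₁₂` then forces `⟨z',z'⟩ = 0`
and `M = diag(1, -1)` forces `2⟨z,z'⟩ = 0`.
-/

open TensorProduct

section SymplecticTensor

variable {R V : Type*} [CommRing R] [AddCommGroup V] [Module R V]
  {B : LinearMap.BilinForm R V} {ω : LinearMap.BilinForm R (V ⊗[R] (Fin 2 → R))}

theorem apply_add_tmul_map_left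
    (hω : ∀ (v w : V) (a b : Fin 2 → R),
      ω (v ⊗ₜ[R] a) (w ⊗ₜ[R] b) = B v w * (a 0 * b 1 - a 1 * b 0))
    (z' z : V) (A : V →ₗ[R] V) :
    ω (z' ⊗ₜ Pi.single 1 1 + z ⊗ₜ Pi.single 0 1)
        (map A LinearMap.id (z' ⊗ₜ Pi.single 1 1 + z ⊗ₜ Pi.single 0 1)) =
      B z (A z') - B z' (A z) := by
  simp [map_tmul, hω]
  ring

theorem apply_add_tmul_map_right
    (hω : ∀ (v w : V) (a b : Fin 2 → R),
      ω (v ⊗ₜ[R] a) (w ⊗ₜ[R] b) = B v w * (a 0 * b 1 - a 1 * b 0))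
    (z' z : V) (M : Matrix (Fin 2) (Fin 2) R) :
    ω (z' ⊗ₜ Pi.single 1 1 + z ⊗ₜ Pi.single 0 1)
        (map LinearMap.id (Matrix.toLin' M) (z' ⊗ₜ Pi.single 1 1 + z ⊗ₜ Pi.single 0 1)) =
      M 1 0 * B z z - M 0 1 * B z' z' - M 0 0 * B z' z + M 1 1 * B z z' := by
  simp [map_tmul, hω]
  ring

theorem forall_apply_add_tmul_map_left_eq_zero_iff
    (hB : B.IsSymm)
    (hω : ∀ (v w : V) (a b : Fin 2 → R),
      ω (v ⊗ₜ[R] a) (w ⊗ₜ[R] b) = B v w * (a 0 * b 1 - a 1 * b 0))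
    (z' z : V) (S : Set (V →ₗ[R] V)) :
    (∀ A ∈ S, ω (z' ⊗ₜ Pi.single 1 1 + z ⊗ₜ Pi.single 0 1)
        (map A LinearMap.id (z' ⊗ₜ Pi.single 1 1 + z ⊗ₜ Pi.single 0 1)) = 0) ↔
      ∀ A ∈ S, B (A z) z' = B z (A z') := by
  refine forall₂_congr fun A _ ↦ ?_
  rw [apply_add_tmul_map_left hω, hB.eq (A z), sub_eq_zero, eq_comm]

theorem forall_upperTriangular_traceless_apply_eq_zero_iff [NoZeroDivisors R] [NeZero (2 : R)]
    (hB : B.IsSymm)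
    (hω : ∀ (v w : V) (a b : Fin 2 → R),
      ω (v ⊗ₜ[R] a) (w ⊗ₜ[R] b) = B v w * (a 0 * b 1 - a 1 * b 0))
    (z' z : V) :
    (∀ M : Matrix (Fin 2) (Fin 2) R, M 1 0 = 0 → M 0 0 + M 1 1 = 0 →
        ω (z' ⊗ₜ Pi.single 1 1 + z ⊗ₜ Pi.single 0 1)
          (map LinearMap.id (Matrix.toLin' M) (z' ⊗ₜ Pi.single 1 1 + z ⊗ₜ Pi.single 0 1)) = 0) ↔
      B z' z' = 0 ∧ B z z' = 0 := by
  simp only [apply_add_tmul_map_right hω, hB.eq z' z]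
  constructor
  · intro h
    have hz'z' := h !![0, 1; 0, 0] rfl (by simp)
    have hzz' := h !![1, 0; 0, -1] rfl (by simp)
    simp only [Matrix.of_apply, Matrix.cons_val', Matrix.cons_val_zero, Matrix.cons_val_one,
      Matrix.empty_val', Matrix.cons_val_fin_one] at hz'z' hzz'
    refine ⟨by linear_combination -hz'z', ?_⟩
    have h2 : (2 : R) * B z z' = 0 := by linear_combination -hzz'
    exact (mul_eq_zero.1 h2).resolve_left two_ne_zero
  · rintro ⟨hz'z', hzz'⟩ M hM10 -
    simp [hM10, hz'z', hzz']

end SymplecticTensor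

theorem stmt9_general {V : Type*} [AddCommGroup V] [Module ℂ V]
    (B : LinearMap.BilinForm ℂ V)
    (hBsymm : ∀ v w : V, B v w = B w v)
    (ω : LinearMap.BilinForm ℂ (V ⊗[ℂ] (Fin 2 → ℂ)))
    (hω : ∀ (v w : V) (a b : Fin 2 → ℂ),
      ω (v ⊗ₜ[ℂ] a) (w ⊗ₜ[ℂ] b) = B v w * (a 0 * b 1 - a 1 * b 0))
    (𝔟 : Set (V →ₗ[ℂ] V))
    (z' z : V) (v : V ⊗[ℂ] (Fin 2 → ℂ))
    (hv : v = z' ⊗ₜ[ℂ] (Pi.single 1 1) + z ⊗ₜ[ℂ] (Pi.single 0 1)) :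
    ((∀ A ∈ 𝔟, ω v (TensorProduct.map A LinearMap.id v) = 0) ∧
     (∀ M : Matrix (Fin 2) (Fin 2) ℂ, M 1 0 = 0 → M 0 0 + M 1 1 = 0 →
        ω v (TensorProduct.map LinearMap.id (Matrix.toLin' M) v) = 0)) ↔
    (B z' z' = 0 ∧ B z z' = 0 ∧ ∀ A ∈ 𝔟, B (A z) z' = B z (A z')) := by
  have hB : B.IsSymm := LinearMap.BilinForm.isSymm_def.2 hBsymm
  subst hv
  rw [forall_apply_add_tmul_map_left_eq_zero_iff hB hω,
    forall_upperTriangular_traceless_apply_eq_zero_iff hB hω, and_comm, and_assoc]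

/-- For `v = z' ⊗ e₂ + z ⊗ e₁ ∈ V ⊗ ℂ²`, vanishing of `ω(v, (A⊗id)v)` for all
`A ∈ 𝔟` and of `ω(v, (id⊗B)v)` for all upper-triangular traceless `B` is equivalent to
`⟨z',z'⟩ = 0`, `⟨z,z'⟩ = 0` and `⟨Az, z'⟩ = ⟨z, Az'⟩` for all `A ∈ 𝔟`. -/
theorem stmt9 {V : Type*} [AddCommGroup V] [Module ℂ V] [FiniteDimensional ℂ V]
    (B : LinearMap.BilinForm ℂ V)
    (hBsymm : ∀ v w : V, B v w = B w v)
    (hBnd : ∀ v : V, (∀ w : V, B v w = 0) → v = 0)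
    (ω : LinearMap.BilinForm ℂ (V ⊗[ℂ] (Fin 2 → ℂ)))
    (hω : ∀ (v w : V) (a b : Fin 2 → ℂ),
      ω (v ⊗ₜ[ℂ] a) (w ⊗ₜ[ℂ] b) = B v w * (a 0 * b 1 - a 1 * b 0))
    (𝔟 : Set (V →ₗ[ℂ] V))
    (h𝔟 : ∀ A ∈ 𝔟, ∀ v w : V, B (A v) w + B v (A w) = 0)
    (z' z : V) (v : V ⊗[ℂ] (Fin 2 → ℂ))
    (hv : v = z' ⊗ₜ[ℂ] (Pi.single 1 1) + z ⊗ₜ[ℂ] (Pi.single 0 1)) :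
    ((∀ A ∈ 𝔟, ω v (TensorProduct.map A LinearMap.id v) = 0) ∧
     (∀ M : Matrix (Fin 2) (Fin 2) ℂ, M 1 0 = 0 → M 0 0 + M 1 1 = 0 →
        ω v (TensorProduct.map LinearMap.id (Matrix.toLin' M) v) = 0)) ↔
    (B z' z' = 0 ∧ B z z' = 0 ∧ ∀ A ∈ 𝔟, B (A z) z' = B z (A z')) :=
  stmt9_general B hBsymm ω hω 𝔟 z' z v hv
end

section
/- In 𝔤₂, the subspace 𝔫 = span(E₂₁, E₃₁, f₁, e₂) is a nilpotent Lie subalgebra; the subspace 𝔰 = span(E₂₃, E₂₂ − E₃₃) is a Lie subalgebra satisfying ⁅𝔰, 𝔫⁆ ⊆ 𝔫; and the linear functional χ on 𝔤₂ defined by χ(x) = κ(e₁, x), where κ is the Killing form of 𝔤₂, vanishes on ⁅𝔫, 𝔫⁆ and on ⁅𝔰, 𝔫⁆. -/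
/-!
Among the generators `E₂₁, E₃₁, f₁, e₂` of `𝔫` the only nonzero bracket is `⁅f₁, e₂⁆ = 3 E₂₁`,
and `E₂₁` commutes with all of them, so `⁅⁅𝔫, 𝔫⁆, 𝔫⁆ = 0`. The generators `E₂₃` and
`H₂₃ = E₂₂ - E₃₃` of `𝔰` satisfy `⁅E₂₃, H₂₃⁆ = -2 E₂₃` and bracket `𝔫` into `span(E₂₁, E₃₁, e₂)`.
Finally `ad H₂₃` kills `e₁` and has the nonzero eigenvalues `1, -1, 1` on `E₂₁, E₃₁, e₂`; since
`κ(⁅H₂₃, x⁆, y) = -κ(x, ⁅H₂₃, y⁆)`, the functional `κ(e₁, ·)` vanishes on these eigenvectors, hence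
on `⁅𝔫, 𝔫⁆ + ⁅𝔰, 𝔫⁆ ⊆ span(E₂₁, E₃₁, e₂)`.
-/

open Matrix

section Matrix

variable {m n α : Type*}

theorem Matrix.col_sub [Sub α] (A B : Matrix m n α) (j : n) :
    (A - B).col j = A.col j - B.col j :=
  rfl

theorem Matrix.row_sub [Sub α] (A B : Matrix m n α) (i : m) :
    (A - B).row i = A.row i - B.row i :=
  rfl

variable [DecidableEq m] [DecidableEq n]

theorem Matrix.col_single [Zero α] (i : m) (j k : n) (c : α) :
    (single i j c).col k = if j = k then Pi.single i c else 0 := by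
  ext i'
  by_cases h : j = k <;> simp [h, single_apply, Pi.single_apply, eq_comm]

theorem Matrix.row_single [Zero α] (i k : m) (j : n) (c : α) :
    (single i j c).row k = if i = k then Pi.single j c else 0 := by
  ext j'
  by_cases h : i = k <;> simp [h, single_apply, Pi.single_apply, eq_comm]

theorem Matrix.map_single_mem_span_singleton {R M : Type*} [CommSemiring R] [AddCommMonoid M]
    [Module R M] (f : Matrix m n R →ₗ[R] M) (i : m) (j : n) (c : R) :
    f (single i j c) ∈ Submodule.span R {f (single i j 1)} :=
  Submodule.mem_span_singleton.mpr ⟨c, by rw [← map_smul, smul_single, smul_eq_mul, mul_one]⟩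

end Matrix

theorem Submodule.lie_mem_of_mem_span {R L : Type*} [CommRing R] [LieRing L] [LieAlgebra R L]
    {s t : Set L} {W : Submodule R L} (h : ∀ x ∈ s, ∀ y ∈ t, ⁅x, y⁆ ∈ W) {x y : L}
    (hx : x ∈ span R s) (hy : y ∈ span R t) : ⁅x, y⁆ ∈ W := by
  have := apply_mem_map₂ (LieModule.toEnd R L L : L →ₗ[R] L →ₗ[R] L) hx hy
  rw [map₂_span_span] at this
  exact span_le.mpr (Set.image2_subset_iff.mpr h) this

theorem LieRing.isNilpotent_of_lie_lie_eq_zero {L : Type*} [LieRing L]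
    (h : ∀ x y z : L, ⁅⁅x, y⁆, z⁆ = 0) : LieRing.IsNilpotent L := by
  show LieModule.IsNilpotent L L
  rw [LieModule.isNilpotent_iff_exists_ucs_eq_top (R := ℤ)]
  refine ⟨2, eq_top_iff.mpr fun z _ => ?_⟩
  simp only [LieSubmodule.ucs_succ, LieSubmodule.ucs_zero, LieSubmodule.mem_normalizer,
    LieSubmodule.mem_bot]
  intro x y
  rw [← lie_skew, h, neg_zero]

theorem LieModule.traceForm_eq_zero_of_lie_eq_smul {R L M : Type*} [CommRing R] [NoZeroDivisors R]
    [LieRing L] [LieAlgebra R L] [AddCommGroup M] [Module R M] [LieRingModule L M]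
    [LieModule R L M] {h x y : L} {a b : R} (hx : ⁅h, x⁆ = a • x) (hy : ⁅h, y⁆ = b • y)
    (hab : a + b ≠ 0) : traceForm R L M x y = 0 := by
  have key : (a + b) * traceForm R L M x y = 0 := by
    have := traceForm_apply_lie_apply' R L M h x y
    rw [hx, hy] at this
    simp only [map_smul, LinearMap.smul_apply, smul_eq_mul] at this
    linear_combination this
  exact (mul_eq_zero.mp key).resolve_left hab

namespace G2

variable {L : Type*} [LieRing L] [LieAlgebra ℂ L] {ιV ιVt : (Fin 3 → ℂ) →ₗ[ℂ] L}
  {ιM : Matrix (Fin 3) (Fin 3) ℂ →ₗ[ℂ] L}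

local notation "e₁" => ιV (Pi.single 0 1)
local notation "e₂" => ιV (Pi.single 1 1)
local notation "f₁" => ιVt (Pi.single 0 1)
local notation "E₂₁" => ιM (Matrix.single 1 0 1)
local notation "E₃₁" => ιM (Matrix.single 2 0 1)
local notation "E₂₃" => ιM (Matrix.single 1 2 1)
local notation "H₂₃" => ιM (Matrix.single 1 1 1 - Matrix.single 2 2 1)

theorem lie_nGens_mem_span_E21
    (hMM : ∀ x y : Matrix (Fin 3) (Fin 3) ℂ, x.trace = 0 → y.trace = 0 →
      ⁅ιM x, ιM y⁆ = ιM (x * y - y * x))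
    (hMV : ∀ x : Matrix (Fin 3) (Fin 3) ℂ, x.trace = 0 → ∀ v : Fin 3 → ℂ,
      ⁅ιM x, ιV v⁆ = ιV (x.mulVec v))
    (hMVt : ∀ x : Matrix (Fin 3) (Fin 3) ℂ, x.trace = 0 → ∀ u : Fin 3 → ℂ,
      ⁅ιM x, ιVt u⁆ = ιVt (-(u ᵥ* x)))
    (hVVt : ∀ (v u : Fin 3 → ℂ), ⁅ιV v, ιVt u⁆ =
      ιM (-(3 : ℂ) • vecMulVec v u + (u ⬝ᵥ v) • (1 : Matrix (Fin 3) (Fin 3) ℂ))) :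
    ∀ x ∈ ({E₂₁, E₃₁, f₁, e₂} : Set L), ∀ y ∈ ({E₂₁, E₃₁, f₁, e₂} : Set L),
      ⁅x, y⁆ ∈ Submodule.span ℂ {E₂₁} := by
  rintro x (rfl | rfl | rfl | rfl) y (rfl | rfl | rfl | rfl) <;>
    simp (disch := simp) only [← lie_skew (ιVt _) (ιM _), ← lie_skew (ιV _) (ιM _),
      ← lie_skew (ιVt _) (ιV _), hMM, hMV, hMVt, hVVt, lie_self] <;>
    simp [col_single, row_single, ← single_eq_single_vecMulVec_single,
      map_single_mem_span_singleton]

theorem lie_E21_nGens_eq_zero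
    (hMM : ∀ x y : Matrix (Fin 3) (Fin 3) ℂ, x.trace = 0 → y.trace = 0 →
      ⁅ιM x, ιM y⁆ = ιM (x * y - y * x))
    (hMV : ∀ x : Matrix (Fin 3) (Fin 3) ℂ, x.trace = 0 → ∀ v : Fin 3 → ℂ,
      ⁅ιM x, ιV v⁆ = ιV (x.mulVec v))
    (hMVt : ∀ x : Matrix (Fin 3) (Fin 3) ℂ, x.trace = 0 → ∀ u : Fin 3 → ℂ,
      ⁅ιM x, ιVt u⁆ = ιVt (-(u ᵥ* x))) :
    ∀ y ∈ ({E₂₁, E₃₁, f₁, e₂} : Set L), ⁅E₂₁, y⁆ = 0 := by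
  rintro y (rfl | rfl | rfl | rfl) <;>
    simp (disch := simp) only [hMM, hMV, hMVt] <;>
    simp [col_single, row_single]

theorem lie_sGens_mem_span_sGens
    (hMM : ∀ x y : Matrix (Fin 3) (Fin 3) ℂ, x.trace = 0 → y.trace = 0 →
      ⁅ιM x, ιM y⁆ = ιM (x * y - y * x)) :
    ∀ x ∈ ({E₂₃, H₂₃} : Set L), ∀ y ∈ ({E₂₃, H₂₃} : Set L),
      ⁅x, y⁆ ∈ Submodule.span ℂ {E₂₃, H₂₃} := by
  rintro x (rfl | rfl) y (rfl | rfl) <;>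
    simp (disch := simp) only [hMM] <;>
    simp [sub_mul, mul_sub, add_mem, sub_mem, Submodule.mem_span_of_mem]

theorem lie_sGens_nGens_mem_span
    (hMM : ∀ x y : Matrix (Fin 3) (Fin 3) ℂ, x.trace = 0 → y.trace = 0 →
      ⁅ιM x, ιM y⁆ = ιM (x * y - y * x))
    (hMV : ∀ x : Matrix (Fin 3) (Fin 3) ℂ, x.trace = 0 → ∀ v : Fin 3 → ℂ,
      ⁅ιM x, ιV v⁆ = ιV (x.mulVec v))
    (hMVt : ∀ x : Matrix (Fin 3) (Fin 3) ℂ, x.trace = 0 → ∀ u : Fin 3 → ℂ,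
      ⁅ιM x, ιVt u⁆ = ιVt (-(u ᵥ* x))) :
    ∀ x ∈ ({E₂₃, H₂₃} : Set L), ∀ y ∈ ({E₂₁, E₃₁, f₁, e₂} : Set L),
      ⁅x, y⁆ ∈ Submodule.span ℂ {E₂₁, E₃₁, e₂} := by
  rintro x (rfl | rfl) y (rfl | rfl | rfl | rfl) <;>
    simp (disch := simp) only [hMM, hMV, hMVt] <;>
    simp [col_single, row_single, col_sub, row_sub, sub_mul, mul_sub,
      Submodule.mem_span_of_mem]

theorem killingForm_e1_eq_zero
    (hMM : ∀ x y : Matrix (Fin 3) (Fin 3) ℂ, x.trace = 0 → y.trace = 0 →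
      ⁅ιM x, ιM y⁆ = ιM (x * y - y * x))
    (hMV : ∀ x : Matrix (Fin 3) (Fin 3) ℂ, x.trace = 0 → ∀ v : Fin 3 → ℂ,
      ⁅ιM x, ιV v⁆ = ιV (x.mulVec v)) :
    ∀ y ∈ ({E₂₁, E₃₁, e₂} : Set L), killingForm ℂ L e₁ y = 0 := by
  have he₁ : ⁅H₂₃, e₁⁆ = (0 : ℂ) • e₁ := by
    simp (disch := simp) only [hMV]; simp [col_single, col_sub]
  have hE₂₁ : ⁅H₂₃, E₂₁⁆ = (1 : ℂ) • E₂₁ := by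
    simp (disch := simp) only [hMM]; simp [sub_mul, mul_sub]
  have hE₃₁ : ⁅H₂₃, E₃₁⁆ = (-1 : ℂ) • E₃₁ := by
    simp (disch := simp) only [hMM]; simp [sub_mul, mul_sub]
  have he₂ : ⁅H₂₃, e₂⁆ = (1 : ℂ) • e₂ := by
    simp (disch := simp) only [hMV]; simp [col_single, col_sub]
  rintro y (rfl | rfl | rfl)
  exacts [LieModule.traceForm_eq_zero_of_lie_eq_smul he₁ hE₂₁ (by norm_num),
    LieModule.traceForm_eq_zero_of_lie_eq_smul he₁ hE₃₁ (by norm_num),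
    LieModule.traceForm_eq_zero_of_lie_eq_smul he₁ he₂ (by norm_num)]

end G2

theorem stmt12_general {L : Type*} [LieRing L] [LieAlgebra ℂ L]
    (ιV ιVt : (Fin 3 → ℂ) →ₗ[ℂ] L) (ιM : Matrix (Fin 3) (Fin 3) ℂ →ₗ[ℂ] L)
    (hMM : ∀ x y : Matrix (Fin 3) (Fin 3) ℂ, x.trace = 0 → y.trace = 0 →
      ⁅ιM x, ιM y⁆ = ιM (x * y - y * x))
    (hMV : ∀ x : Matrix (Fin 3) (Fin 3) ℂ, x.trace = 0 → ∀ v : Fin 3 → ℂ,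
      ⁅ιM x, ιV v⁆ = ιV (x.mulVec v))
    (hMVt : ∀ x : Matrix (Fin 3) (Fin 3) ℂ, x.trace = 0 → ∀ u : Fin 3 → ℂ,
      ⁅ιM x, ιVt u⁆ = ιVt (-(u ᵥ* x)))
    (hVVt : ∀ (v u : Fin 3 → ℂ),
      ⁅ιV v, ιVt u⁆ = ιM (-(3 : ℂ) • vecMulVec v u + (u ⬝ᵥ v) • (1 : Matrix (Fin 3) (Fin 3) ℂ)))
    (N S : Submodule ℂ L)
    (hN : N = Submodule.span ℂ {ιM (Matrix.single 1 0 1), ιM (Matrix.single 2 0 1),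
      ιVt (Pi.single 0 1), ιV (Pi.single 1 1)})
    (hS : S = Submodule.span ℂ {ιM (Matrix.single 1 2 1),
      ιM (Matrix.single 1 1 1 - Matrix.single 2 2 1)}) :
    (∃ K : LieSubalgebra ℂ L, K.toSubmodule = N ∧ LieRing.IsNilpotent K) ∧
    (∃ K : LieSubalgebra ℂ L, K.toSubmodule = S) ∧
    (∀ s ∈ S, ∀ n ∈ N, ⁅s, n⁆ ∈ N) ∧
    (∀ x ∈ N, ∀ y ∈ N, killingForm ℂ L (ιV (Pi.single 0 1)) ⁅x, y⁆ = 0) ∧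
    (∀ s ∈ S, ∀ n ∈ N, killingForm ℂ L (ιV (Pi.single 0 1)) ⁅s, n⁆ = 0) := by
  set χ := killingForm ℂ L (ιV (Pi.single 0 1))
  set Z := Submodule.span ℂ {ιM (Matrix.single 1 0 1)}
  set W := Submodule.span ℂ
    {ιM (Matrix.single 1 0 1), ιM (Matrix.single 2 0 1), ιV (Pi.single 1 1)}
  have hNN : ∀ x ∈ N, ∀ y ∈ N, ⁅x, y⁆ ∈ Z := fun x hx y hy => by
    subst hN
    exact Submodule.lie_mem_of_mem_span (G2.lie_nGens_mem_span_E21 hMM hMV hMVt hVVt) hx hy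
  have hZN : ∀ z ∈ Z, ∀ n ∈ N, ⁅z, n⁆ = 0 := fun z hz n hn => by
    subst hN
    refine (Submodule.mem_bot ℂ).mp (Submodule.lie_mem_of_mem_span ?_ hz hn)
    simpa using G2.lie_E21_nGens_eq_zero hMM hMV hMVt
  have hSN : ∀ s ∈ S, ∀ n ∈ N, ⁅s, n⁆ ∈ W := fun s hs n hn => by
    subst hN hS
    exact Submodule.lie_mem_of_mem_span (G2.lie_sGens_nGens_mem_span hMM hMV hMVt) hs hn
  have hZW : Z ≤ W := Submodule.span_mono (by simp)
  have hWN : W ≤ N := hN ▸ Submodule.span_mono (by simp [Set.insert_subset_iff])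
  have hWχ : W ≤ LinearMap.ker χ :=
    Submodule.span_le.mpr fun y hy => G2.killingForm_e1_eq_zero hMM hMV y hy
  refine ⟨⟨{ N with lie_mem' := fun hx hy => hWN (hZW (hNN _ hx _ hy)) }, rfl, ?_⟩,
    ⟨{ S with lie_mem' := fun hx hy => ?_ }, rfl⟩, fun s hs n hn => hWN (hSN s hs n hn),
    fun x hx y hy => hWχ (hZW (hNN x hx y hy)), fun s hs n hn => hWχ (hSN s hs n hn)⟩
  · exact LieRing.isNilpotent_of_lie_lie_eq_zero fun x y z =>
      Subtype.ext (hZN _ (hNN _ x.2 _ y.2) _ z.2)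
  · subst hS
    exact Submodule.lie_mem_of_mem_span (G2.lie_sGens_mem_span_sGens hMM) hx hy

/-- In `𝔤₂`, `𝔫 = span(E₂₁, E₃₁, f₁, e₂)` is a nilpotent Lie subalgebra,
`𝔰 = span(E₂₃, E₂₂ - E₃₃)` is a Lie subalgebra with `⁅𝔰, 𝔫⁆ ⊆ 𝔫`, and `χ(x) = κ(e₁, x)`
vanishes on `⁅𝔫, 𝔫⁆` and on `⁅𝔰, 𝔫⁆`. -/
theorem stmt12 {L : Type*} [LieRing L] [LieAlgebra ℂ L] [Module.Finite ℂ L]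
    (ιV ιVt : (Fin 3 → ℂ) →ₗ[ℂ] L) (ιM : Matrix (Fin 3) (Fin 3) ℂ →ₗ[ℂ] L)
    (hbij : Function.Bijective
      (fun p : (Fin 3 → ℂ) × {x : Matrix (Fin 3) (Fin 3) ℂ // x.trace = 0} × (Fin 3 → ℂ) =>
        ιV p.1 + ιM p.2.1.val + ιVt p.2.2))
    (hMM : ∀ x y : Matrix (Fin 3) (Fin 3) ℂ, x.trace = 0 → y.trace = 0 →
      ⁅ιM x, ιM y⁆ = ιM (x * y - y * x))
    (hMV : ∀ x : Matrix (Fin 3) (Fin 3) ℂ, x.trace = 0 → ∀ v : Fin 3 → ℂ,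
      ⁅ιM x, ιV v⁆ = ιV (x.mulVec v))
    (hMVt : ∀ x : Matrix (Fin 3) (Fin 3) ℂ, x.trace = 0 → ∀ u : Fin 3 → ℂ,
      ⁅ιM x, ιVt u⁆ = ιVt (-(u ᵥ* x)))
    (hVV : ∀ v w : Fin 3 → ℂ, ⁅ιV v, ιV w⁆ = ιVt ((2 : ℂ) • crossProduct v w))
    (hVtVt : ∀ u w : Fin 3 → ℂ, ⁅ιVt u, ιVt w⁆ = ιV ((2 : ℂ) • crossProduct u w))
    (hVVt : ∀ (v u : Fin 3 → ℂ),
      ⁅ιV v, ιVt u⁆ = ιM (-(3 : ℂ) • vecMulVec v u + (u ⬝ᵥ v) • (1 : Matrix (Fin 3) (Fin 3) ℂ)))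
    (N S : Submodule ℂ L)
    (hN : N = Submodule.span ℂ {ιM (Matrix.single 1 0 1), ιM (Matrix.single 2 0 1),
      ιVt (Pi.single 0 1), ιV (Pi.single 1 1)})
    (hS : S = Submodule.span ℂ {ιM (Matrix.single 1 2 1),
      ιM (Matrix.single 1 1 1 - Matrix.single 2 2 1)}) :
    (∃ K : LieSubalgebra ℂ L, K.toSubmodule = N ∧ LieRing.IsNilpotent K) ∧
    (∃ K : LieSubalgebra ℂ L, K.toSubmodule = S) ∧
    (∀ s ∈ S, ∀ n ∈ N, ⁅s, n⁆ ∈ N) ∧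
    (∀ x ∈ N, ∀ y ∈ N, killingForm ℂ L (ιV (Pi.single 0 1)) ⁅x, y⁆ = 0) ∧
    (∀ s ∈ S, ∀ n ∈ N, killingForm ℂ L (ιV (Pi.single 0 1)) ⁅s, n⁆ = 0) :=
  stmt12_general ιV ιVt ιM hMM hMV hMVt hVVt N S hN hS
end

section
/- For traceless diagonal matrices a = diag(a₁,a₂,a₃) and b = diag(b₁,b₂,b₃) in 𝔰𝔩₃(ℂ) ⊆ 𝔤₂, the Killing form κ of 𝔤₂ satisfies κ(a,b) = 6·(a₁b₁ + a₂b₂ + a₃b₃) − 2·Σ_{i≠j} aᵢbⱼ (equivalently, κ(a,b) = 8·(a₁b₁ + a₂b₂ + a₃b₃), since a₁+a₂+a₃ = b₁+b₂+b₃ = 0). -/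
open Matrix

/-!
`ad(diag d) ∘ ad(diag c)` preserves each summand of `𝔤₂ = V ⊕ 𝔰𝔩₃ ⊕ Vᵗ`. On `V` and `Vᵗ` it acts
by `diag(dᵢcᵢ)`; on `𝔰𝔩₃` its trace is the one on `𝔤𝔩₃` (its image is traceless), where the matrix
units are eigenvectors with eigenvalues `(dᵢ - dⱼ)(cᵢ - cⱼ)`. Hence
`κ(a, b) = 2 Σ dᵢcᵢ + Σᵢⱼ (dᵢ - dⱼ)(cᵢ - cⱼ)`, which is `8 Σ dᵢcᵢ` when `Σ dᵢ = Σ cᵢ = 0`.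
-/

theorem LinearMap.trace_eq_sum_of_apply_basis_eq_smul {R M ι : Type*} [CommRing R] [AddCommGroup M]
    [Module R M] [Fintype ι] [DecidableEq ι] (b : Module.Basis ι R M) (f : M →ₗ[R] M) (μ : ι → R)
    (h : ∀ i, f (b i) = μ i • b i) :
    trace R M f = ∑ i, μ i := by
  simp [trace_eq_matrix_trace R b, Matrix.trace, toMatrix_apply, h]

theorem LinearMap.trace_eq_add_add_of_bijective_coprod {R M₁ M₂ M₃ N : Type*} [CommRing R]
    [AddCommGroup M₁] [Module R M₁] [Module.Free R M₁] [Module.Finite R M₁]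
    [AddCommGroup M₂] [Module R M₂] [Module.Free R M₂] [Module.Finite R M₂]
    [AddCommGroup M₃] [Module R M₃] [Module.Free R M₃] [Module.Finite R M₃]
    [AddCommGroup N] [Module R N] {ι₁ : M₁ →ₗ[R] N} {ι₂ : M₂ →ₗ[R] N} {ι₃ : M₃ →ₗ[R] N}
    (hι : Function.Bijective (ι₁.coprod (ι₂.coprod ι₃))) {T : N →ₗ[R] N}
    {f₁ : M₁ →ₗ[R] M₁} {f₂ : M₂ →ₗ[R] M₂} {f₃ : M₃ →ₗ[R] M₃}
    (h₁ : T ∘ₗ ι₁ = ι₁ ∘ₗ f₁) (h₂ : T ∘ₗ ι₂ = ι₂ ∘ₗ f₂) (h₃ : T ∘ₗ ι₃ = ι₃ ∘ₗ f₃) :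
    trace R N T = trace R M₁ f₁ + trace R M₂ f₂ + trace R M₃ f₃ := by
  let e := LinearEquiv.ofBijective _ hι
  have hT : T = e.conj (prodMap f₁ (prodMap f₂ f₃)) := by
    rw [LinearEquiv.conj_apply, LinearEquiv.eq_comp_toLinearMap_symm]
    ext x
    · simpa [e] using LinearMap.congr_fun h₁ x
    · simpa [e] using LinearMap.congr_fun h₂ x
    · simpa [e] using LinearMap.congr_fun h₃ x
  rw [hT, trace_conj', trace_prodMap', trace_prodMap', add_assoc]

theorem Matrix.lie_diagonal_single {n R : Type*} [Fintype n] [DecidableEq n] [CommRing R]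
    (d : n → R) (i j : n) (r : R) :
    ⁅diagonal d, single i j r⁆ = (d i - d j) • single i j r := by
  ext a b
  simp only [Ring.lie_def, sub_apply, diagonal_mul, mul_diagonal, smul_apply, single_apply,
    smul_eq_mul]
  split_ifs with h
  · obtain ⟨rfl, rfl⟩ := h
    ring
  · simp

section

attribute [local instance] LieRing.ofAssociativeRing LieAlgebra.ofAssociativeAlgebra

theorem Matrix.killingForm_diagonal_diagonal {n R : Type*} [Fintype n] [DecidableEq n]
    [CommRing R] (d c : n → R) :
    killingForm R (Matrix n n R) (diagonal d) (diagonal c)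
      = ∑ i, ∑ j, (d i - d j) * (c i - c j) := by
  rw [killingForm_apply_apply, ← Fintype.sum_prod_type']
  refine LinearMap.trace_eq_sum_of_apply_basis_eq_smul (stdBasis R n n) _ _ fun ⟨i, j⟩ => ?_
  simp only [stdBasis_eq_single, LinearMap.comp_apply, LieAlgebra.ad_apply, lie_diagonal_single,
    lie_smul, smul_smul, mul_comm]

theorem killingForm_diagonal_diagonal_of_bijective {K n L : Type*} [Field K] [Fintype n]
    [DecidableEq n] [LieRing L] [LieAlgebra K L]
    (ιV ιVt : (n → K) →ₗ[K] L) (ιM : Matrix n n K →ₗ[K] L)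
    (hbij : Function.Bijective
      (fun p : (n → K) × {x : Matrix n n K // x.trace = 0} × (n → K) =>
        ιV p.1 + ιM p.2.1.val + ιVt p.2.2))
    (hMM : ∀ x y : Matrix n n K, x.trace = 0 → y.trace = 0 → ⁅ιM x, ιM y⁆ = ιM (x * y - y * x))
    (hMV : ∀ x : Matrix n n K, x.trace = 0 → ∀ v : n → K, ⁅ιM x, ιV v⁆ = ιV (x.mulVec v))
    (hMVt : ∀ x : Matrix n n K, x.trace = 0 → ∀ u : n → K, ⁅ιM x, ιVt u⁆ = ιVt (-(u ᵥ* x)))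
    {d c : n → K} (hd : ∑ i, d i = 0) (hc : ∑ i, c i = 0) :
    killingForm K L (ιM (diagonal d)) (ιM (diagonal c))
      = 2 * ∑ i, d i * c i + ∑ i, ∑ j, (d i - d j) * (c i - c j) := by
  set D := diagonal d
  set C := diagonal c
  have hD : D.trace = 0 := by rwa [trace_diagonal]
  have hC : C.trace = 0 := by rwa [trace_diagonal]
  let sl := LinearMap.ker (traceLinearMap n K K)
  have hbij' : Function.Bijective (ιV.coprod ((ιM ∘ₗ sl.subtype).coprod ιVt)) := by
    have h : ⇑(ιV.coprod ((ιM ∘ₗ sl.subtype).coprod ιVt)) =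
        fun p : (n → K) × sl × (n → K) => ιV p.1 + ιM p.2.1.val + ιVt p.2.2 :=
      funext fun _ => (add_assoc _ _ _).symm
    rw [h]
    exact hbij
  let T := LieAlgebra.ad K L (ιM D) ∘ₗ LieAlgebra.ad K L (ιM C)
  let adDC := LieAlgebra.ad K (Matrix n n K) D ∘ₗ LieAlgebra.ad K (Matrix n n K) C
  have hadDC : ∀ x, adDC x ∈ sl := fun x => LieAlgebra.matrix_trace_commutator_zero n K _ _
  have hV : T ∘ₗ ιV = ιV ∘ₗ toLin' (D * C) := by
    refine LinearMap.ext fun v => ?_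
    simp [T, hMV _ hC, hMV _ hD, mulVec_mulVec]
  have hM : T ∘ₗ (ιM ∘ₗ sl.subtype) = (ιM ∘ₗ sl.subtype) ∘ₗ adDC.restrict fun x _ => hadDC x := by
    have hMM' : ∀ x y : Matrix n n K, x.trace = 0 → y.trace = 0 → ⁅ιM x, ιM y⁆ = ιM ⁅x, y⁆ :=
      fun x y hx hy => by rw [Ring.lie_def]; exact hMM x y hx hy
    refine LinearMap.ext fun ⟨x, hx⟩ => ?_
    simp only [T, adDC, LinearMap.comp_apply, LieAlgebra.ad_apply, Submodule.subtype_apply,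
      LinearMap.restrict_apply]
    rw [hMM' _ _ hC hx, hMM' _ _ hD (LieAlgebra.matrix_trace_commutator_zero n K _ _)]
  have hVt : T ∘ₗ ιVt = ιVt ∘ₗ toLin' (C * D)ᵀ := by
    refine LinearMap.ext fun u => ?_
    simp [T, hMVt _ hC, hMVt _ hD, mulVec_transpose, vecMul_vecMul]
  rw [killingForm_apply_apply, LinearMap.trace_eq_add_add_of_bijective_coprod hbij' hV hM hVt,
    LinearMap.trace_restrict_eq_of_forall_mem _ _ hadDC, ← killingForm_apply_apply,
    killingForm_diagonal_diagonal, trace_toLin'_eq, trace_toLin'_eq, trace_transpose,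
    trace_mul_comm C, diagonal_mul_diagonal, trace_diagonal]
  ring

end

theorem stmt13_general {L : Type*} [LieRing L] [LieAlgebra ℂ L]
    (ιV ιVt : (Fin 3 → ℂ) →ₗ[ℂ] L) (ιM : Matrix (Fin 3) (Fin 3) ℂ →ₗ[ℂ] L)
    (hbij : Function.Bijective
      (fun p : (Fin 3 → ℂ) × {x : Matrix (Fin 3) (Fin 3) ℂ // x.trace = 0} × (Fin 3 → ℂ) =>
        ιV p.1 + ιM p.2.1.val + ιVt p.2.2))
    (hMM : ∀ x y : Matrix (Fin 3) (Fin 3) ℂ, x.trace = 0 → y.trace = 0 →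
      ⁅ιM x, ιM y⁆ = ιM (x * y - y * x))
    (hMV : ∀ x : Matrix (Fin 3) (Fin 3) ℂ, x.trace = 0 → ∀ v : Fin 3 → ℂ,
      ⁅ιM x, ιV v⁆ = ιV (x.mulVec v))
    (hMVt : ∀ x : Matrix (Fin 3) (Fin 3) ℂ, x.trace = 0 → ∀ u : Fin 3 → ℂ,
      ⁅ιM x, ιVt u⁆ = ιVt (-(u ᵥ* x)))
    :
    ∀ d c : Fin 3 → ℂ, d 0 + d 1 + d 2 = 0 → c 0 + c 1 + c 2 = 0 →
      killingForm ℂ L (ιM (Matrix.diagonal d)) (ιM (Matrix.diagonal c))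
          = 6 * (d 0 * c 0 + d 1 * c 1 + d 2 * c 2)
            - 2 * (d 0 * c 1 + d 0 * c 2 + d 1 * c 0 + d 1 * c 2 + d 2 * c 0 + d 2 * c 1) ∧
      killingForm ℂ L (ιM (Matrix.diagonal d)) (ιM (Matrix.diagonal c))
          = 8 * (d 0 * c 0 + d 1 * c 1 + d 2 * c 2) := by
  intro d c hd hc
  rw [killingForm_diagonal_diagonal_of_bijective ιV ιVt ιM hbij hMM hMV hMVt
    (by rwa [Fin.sum_univ_three]) (by rwa [Fin.sum_univ_three])]
  simp only [Fin.sum_univ_three]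
  constructor
  · ring
  · linear_combination (-2 * (c 0 + c 1 + c 2)) * hd

/-- For traceless diagonal matrices `a = diag(a₁,a₂,a₃)`,
`b = diag(b₁,b₂,b₃)` in `𝔰𝔩₃(ℂ) ⊆ 𝔤₂`, the Killing form of `𝔤₂` satisfies
`κ(a,b) = 6·Σ aᵢbᵢ - 2·Σ_{i≠j} aᵢbⱼ = 8·Σ aᵢbᵢ`. -/
theorem stmt13 {L : Type*} [LieRing L] [LieAlgebra ℂ L] [Module.Finite ℂ L]
    (ιV ιVt : (Fin 3 → ℂ) →ₗ[ℂ] L) (ιM : Matrix (Fin 3) (Fin 3) ℂ →ₗ[ℂ] L)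
    (hbij : Function.Bijective
      (fun p : (Fin 3 → ℂ) × {x : Matrix (Fin 3) (Fin 3) ℂ // x.trace = 0} × (Fin 3 → ℂ) =>
        ιV p.1 + ιM p.2.1.val + ιVt p.2.2))
    (hMM : ∀ x y : Matrix (Fin 3) (Fin 3) ℂ, x.trace = 0 → y.trace = 0 →
      ⁅ιM x, ιM y⁆ = ιM (x * y - y * x))
    (hMV : ∀ x : Matrix (Fin 3) (Fin 3) ℂ, x.trace = 0 → ∀ v : Fin 3 → ℂ,
      ⁅ιM x, ιV v⁆ = ιV (x.mulVec v))
    (hMVt : ∀ x : Matrix (Fin 3) (Fin 3) ℂ, x.trace = 0 → ∀ u : Fin 3 → ℂ,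
      ⁅ιM x, ιVt u⁆ = ιVt (-(u ᵥ* x)))
    (hVV : ∀ v w : Fin 3 → ℂ, ⁅ιV v, ιV w⁆ = ιVt ((2 : ℂ) • crossProduct v w))
    (hVtVt : ∀ u w : Fin 3 → ℂ, ⁅ιVt u, ιVt w⁆ = ιV ((2 : ℂ) • crossProduct u w))
    (hVVt : ∀ (v u : Fin 3 → ℂ),
      ⁅ιV v, ιVt u⁆ = ιM (-(3 : ℂ) • vecMulVec v u + (u ⬝ᵥ v) • (1 : Matrix (Fin 3) (Fin 3) ℂ)))
    :
    ∀ d c : Fin 3 → ℂ, d 0 + d 1 + d 2 = 0 → c 0 + c 1 + c 2 = 0 →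
      killingForm ℂ L (ιM (Matrix.diagonal d)) (ιM (Matrix.diagonal c))
          = 6 * (d 0 * c 0 + d 1 * c 1 + d 2 * c 2)
            - 2 * (d 0 * c 1 + d 0 * c 2 + d 1 * c 0 + d 1 * c 2 + d 2 * c 0 + d 2 * c 1) ∧
      killingForm ℂ L (ιM (Matrix.diagonal d)) (ιM (Matrix.diagonal c))
          = 8 * (d 0 * c 0 + d 1 * c 1 + d 2 * c 2) :=
  stmt13_general ιV ιVt ιM hbij hMM hMV hMVt
end

section
/- Let 𝔥 ⊆ 𝔤₂ be the diagonal Cartan subalgebra and let aᵢ ∈ 𝔥* be defined by aᵢ(diag(t₁,t₂,t₃)) = tᵢ. Then for every H ∈ 𝔥 and all i ≠ j: κ(tᵢ, H) = aᵢ(H) where tᵢ = (3Eᵢᵢ − Id)/24, and κ(tᵢⱼ, H) = (aᵢ − aⱼ)(H) where tᵢⱼ = (Eᵢᵢ − Eⱼⱼ)/8; consequently the squared lengths ‖aᵢ‖² = κ(tᵢ, tᵢ) = 1/12 and ‖aᵢ − aⱼ‖² = κ(tᵢⱼ, tᵢⱼ) = 1/4, so that ‖aᵢ − aⱼ‖²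 = 3·‖aᵢ‖². -/
/-!
As an `𝔰𝔩₃`-module, `𝔤₂ = V ⊕ 𝔰𝔩₃ ⊕ Vᵗ`, so for traceless `a, b` the Killing form
`κ(a, b) = tr (ad a ∘ ad b)` splits as `tr_V (ab) + κ_{𝔰𝔩₃}(a, b) + tr_{Vᵗ}(ab)`, which is
`(1 + 6 + 1) tr (ab)` since `κ_{𝔰𝔩ₙ} = 2n tr`. With `κ = 8 tr` on `𝔰𝔩₃`, every claimed value
is the trace of a product of diagonal matrices.
-/

open Matrix LieAlgebra.SpecialLinear

namespace Matrix

variable {n R : Type*} [Fintype n] [CommRing R]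

theorem stdBasis_repr_apply (M : Matrix n n R) (p : n × n) :
    (stdBasis R n n).repr M p = M p.1 p.2 := by
  simp [stdBasis]

variable [DecidableEq n]

theorem trace_end_eq_sum_single (φ : Module.End R (Matrix n n R)) :
    LinearMap.trace R _ φ = ∑ i, ∑ j, φ (single i j 1) i j := by
  rw [LinearMap.trace_eq_matrix_trace R (stdBasis R n n), Matrix.trace, ← Finset.univ_product_univ,
    Finset.sum_product]
  simp [LinearMap.toMatrix_apply, stdBasis_repr_apply, stdBasis_eq_single]

theorem trace_mulLeft_sub_mulRight_comp (a b : Matrix n n R) :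
    LinearMap.trace R _ ((LinearMap.mulLeft R a - LinearMap.mulRight R a) ∘ₗ
        (LinearMap.mulLeft R b - LinearMap.mulRight R b))
      = 2 * Fintype.card n * (a * b).trace - 2 * a.trace * b.trace := by
  rw [trace_end_eq_sum_single]
  simp [Matrix.mul_sub, Matrix.sub_mul, Matrix.mul_assoc, mul_apply, single,
    Finset.sum_sub_distrib, ite_and, Matrix.trace, Finset.mul_sum, Finset.sum_mul]
  rw [Finset.sum_comm (f := fun x i => _ * (b x i * a i x)),
    Finset.sum_comm (f := fun x y => b x x * a y y),
    Finset.sum_comm (f := fun x i => 2 * a i i * b x x)]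
  simp only [mul_comm (b _ _) (a _ _), ← Finset.sum_sub_distrib]
  congr! 2 with x _ i
  ring

end Matrix

theorem killingForm_eq_trace_comp_of_intertwines {R L M : Type*} [CommRing R] [LieRing L]
    [LieAlgebra R L] [Module.Free R L] [Module.Finite R L] [AddCommGroup M] [Module R M]
    (e : M ≃ₗ[R] L) {x y : L} {Dx Dy : Module.End R M}
    (hx : ∀ m, e (Dx m) = ⁅x, e m⁆) (hy : ∀ m, e (Dy m) = ⁅y, e m⁆) :
    killingForm R L x y = LinearMap.trace R M (Dx ∘ₗ Dy) := by
  have ad_eq_conj : ∀ {z : L} {D : Module.End R M}, (∀ m, e (D m) = ⁅z, e m⁆) →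
      LieAlgebra.ad R L z = e.conj D := fun hz => by
    ext l
    obtain ⟨m, rfl⟩ := e.surjective l
    simp [LinearEquiv.conj_apply, hz]
  rw [killingForm_apply_apply, ad_eq_conj hx, ad_eq_conj hy, ← LinearEquiv.conj_comp,
    LinearMap.trace_conj']

section SlDecomposition

attribute [local instance] LieRing.ofAssociativeRing

namespace LieAlgebra.SpecialLinear

variable {n K : Type*} [Fintype n] [DecidableEq n] [Field K]

theorem trace_coe_eq_zero (a : sl n K) : (a : Matrix n n K).trace = 0 := a.2

theorem killingForm_apply (a b : sl n K) :
    killingForm K (sl n K) a b = 2 * Fintype.card n * (a * b : Matrix n n K).trace := by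
  let ad (c : Matrix n n K) := LinearMap.mulLeft K c - LinearMap.mulRight K c
  have hmem : ∀ c x, ad c x ∈ (sl n K).toSubmodule := fun c x => by
    show (c * x - x * c).trace = 0
    rw [trace_sub, trace_mul_comm, sub_self]
  have hrestrict : LieAlgebra.ad K (sl n K) a ∘ₗ LieAlgebra.ad K (sl n K) b
      = (ad a ∘ₗ ad b).restrict (p := (sl n K).toSubmodule) (q := (sl n K).toSubmodule)
          fun x _ => hmem a _ := by
    ext x
    rfl
  rw [killingForm_apply_apply, hrestrict]
  refine (LinearMap.trace_restrict_eq_of_forall_mem _ (ad a ∘ₗ ad b) fun x => hmem a _).trans ?_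
  rw [trace_mulLeft_sub_mulRight_comp, trace_coe_eq_zero a]
  ring

end LieAlgebra.SpecialLinear

variable {n K L : Type*} [Fintype n] [DecidableEq n] [Field K]
  [LieRing L] [LieAlgebra K L] [Module.Finite K L]

theorem killingForm_apply_of_sl_decomposition
    (ιV ιVt : (n → K) →ₗ[K] L) (ιM : Matrix n n K →ₗ[K] L)
    (hbij : Function.Bijective
      (fun p : (n → K) × {x : Matrix n n K // x.trace = 0} × (n → K) =>
        ιV p.1 + ιM p.2.1.val + ιVt p.2.2))
    (hMM : ∀ x y : Matrix n n K, x.trace = 0 → y.trace = 0 →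
      ⁅ιM x, ιM y⁆ = ιM (x * y - y * x))
    (hMV : ∀ x : Matrix n n K, x.trace = 0 → ∀ v : n → K,
      ⁅ιM x, ιV v⁆ = ιV (x.mulVec v))
    (hMVt : ∀ x : Matrix n n K, x.trace = 0 → ∀ u : n → K,
      ⁅ιM x, ιVt u⁆ = ιVt (-(u ᵥ* x)))
    (a b : Matrix n n K) (ha : a.trace = 0) (hb : b.trace = 0) :
    killingForm K L (ιM a) (ιM b) = (2 * Fintype.card n + 2) * (a * b).trace := by
  let f : ((n → K) × sl n K × (n → K)) →ₗ[K] L :=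
    ιV.coprod ((ιM ∘ₗ (sl n K).toSubmodule.subtype).coprod ιVt)
  have hf : Function.Bijective f := by
    let σ : (n → K) × sl n K × (n → K) ≃ (n → K) × {x : Matrix n n K // x.trace = 0} × (n → K) :=
      (Equiv.refl _).prodCongr ((Equiv.subtypeEquivRight fun _ => Iff.rfl).prodCongr (Equiv.refl _))
    convert hbij.comp σ.bijective using 1
    funext p
    exact (add_assoc _ _ _).symm
  let D (c : sl n K) : Module.End K ((n → K) × sl n K × (n → K)) :=
    (toLin' c).prodMap ((LieAlgebra.ad K (sl n K) c).prodMap (toLin' (-(c : Matrix n n K)ᵀ)))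
  let e := LinearEquiv.ofBijective f hf
  have hD (c : sl n K) (p) : e (D c p) = ⁅ιM c, e p⁆ := by
    obtain ⟨v, x, u⟩ := p
    simp [e, f, D, lie_add, hMV _ (trace_coe_eq_zero c), hMVt _ (trace_coe_eq_zero c),
      hMM _ _ (trace_coe_eq_zero c) (trace_coe_eq_zero x), mulVec_transpose,
      LieRing.of_associative_ring_bracket]
  rw [killingForm_eq_trace_comp_of_intertwines e (hD ⟨a, ha⟩) (hD ⟨b, hb⟩),
    LinearMap.prodMap_comp, LinearMap.prodMap_comp, LinearMap.trace_prodMap',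
    LinearMap.trace_prodMap', ← killingForm_apply_apply, killingForm_apply, ← toLin'_mul,
    ← toLin'_mul, trace_toLin'_eq, trace_toLin'_eq]
  simp only [neg_mul, mul_neg, neg_neg, ← transpose_mul, trace_transpose, trace_mul_comm b a]
  ring

end SlDecomposition

theorem stmt14_general {L : Type*} [LieRing L] [LieAlgebra ℂ L] [Module.Finite ℂ L]
    (ιV ιVt : (Fin 3 → ℂ) →ₗ[ℂ] L) (ιM : Matrix (Fin 3) (Fin 3) ℂ →ₗ[ℂ] L)
    (hbij : Function.Bijective
      (fun p : (Fin 3 → ℂ) × {x : Matrix (Fin 3) (Fin 3) ℂ // x.trace = 0} × (Fin 3 → ℂ) =>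
        ιV p.1 + ιM p.2.1.val + ιVt p.2.2))
    (hMM : ∀ x y : Matrix (Fin 3) (Fin 3) ℂ, x.trace = 0 → y.trace = 0 →
      ⁅ιM x, ιM y⁆ = ιM (x * y - y * x))
    (hMV : ∀ x : Matrix (Fin 3) (Fin 3) ℂ, x.trace = 0 → ∀ v : Fin 3 → ℂ,
      ⁅ιM x, ιV v⁆ = ιV (x.mulVec v))
    (hMVt : ∀ x : Matrix (Fin 3) (Fin 3) ℂ, x.trace = 0 → ∀ u : Fin 3 → ℂ,
      ⁅ιM x, ιVt u⁆ = ιVt (-(u ᵥ* x)))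
    :
    ∀ i j : Fin 3, i ≠ j →
      ∀ ti tij : Matrix (Fin 3) (Fin 3) ℂ,
        ti = (24 : ℂ)⁻¹ • ((3 : ℂ) • Matrix.single i i 1 - 1) →
        tij = (8 : ℂ)⁻¹ • (Matrix.single i i 1 - Matrix.single j j 1) →
        (∀ d : Fin 3 → ℂ, d 0 + d 1 + d 2 = 0 →
          killingForm ℂ L (ιM ti) (ιM (Matrix.diagonal d)) = d i ∧
          killingForm ℂ L (ιM tij) (ιM (Matrix.diagonal d)) = d i - d j) ∧
        killingForm ℂ L (ιM ti) (ιM ti) = 1 / 12 ∧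
        killingForm ℂ L (ιM tij) (ιM tij) = 1 / 4 ∧
        killingForm ℂ L (ιM tij) (ιM tij) = 3 * killingForm ℂ L (ιM ti) (ιM ti) := by
  intro i j hij ti tij hti htij
  have hκ : ∀ a b : Matrix (Fin 3) (Fin 3) ℂ, a.trace = 0 → b.trace = 0 →
      killingForm ℂ L (ιM a) (ιM b) = 8 * (a * b).trace := fun a b ha hb => by
    rw [killingForm_apply_of_sl_decomposition ιV ιVt ιM hbij hMM hMV hMVt a b ha hb]
    norm_num
  have hti0 : ti.trace = 0 := by simp [hti]
  have htij0 : tij.trace = 0 := by simp [htij]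
  have hti2 : 8 * (ti * ti).trace = 1 / 12 := by
    simp [hti, sub_mul, mul_sub]
    norm_num
  have htij2 : 8 * (tij * tij).trace = 1 / 4 := by
    simp [htij, sub_mul, mul_sub, hij, hij.symm]
    norm_num
  refine ⟨fun d hd => ?_, hκ ti ti hti0 hti0 ▸ hti2, hκ tij tij htij0 htij0 ▸ htij2, ?_⟩
  · have hd0 : (diagonal d).trace = 0 := by simpa [Fin.sum_univ_three] using hd
    rw [hκ ti _ hti0 hd0, hκ tij _ htij0 hd0]
    constructor
    · simp [hti, sub_mul, trace_single_mul, hd0]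
      ring
    · simp [htij, sub_mul, trace_single_mul]
  · rw [hκ ti ti hti0 hti0, hκ tij tij htij0 htij0, hti2, htij2]
    norm_num

/-- With `tᵢ = (3Eᵢᵢ - Id)/24` and `tᵢⱼ = (Eᵢᵢ - Eⱼⱼ)/8`, for every
traceless diagonal `H = diag(d)`: `κ(tᵢ, H) = aᵢ(H) = d i` and `κ(tᵢⱼ, H) = (aᵢ - aⱼ)(H)`;
moreover `‖aᵢ‖² = κ(tᵢ,tᵢ) = 1/12`, `‖aᵢ-aⱼ‖² = κ(tᵢⱼ,tᵢⱼ) = 1/4 = 3·‖aᵢ‖²`. -/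
theorem stmt14 {L : Type*} [LieRing L] [LieAlgebra ℂ L] [Module.Finite ℂ L]
    (ιV ιVt : (Fin 3 → ℂ) →ₗ[ℂ] L) (ιM : Matrix (Fin 3) (Fin 3) ℂ →ₗ[ℂ] L)
    (hbij : Function.Bijective
      (fun p : (Fin 3 → ℂ) × {x : Matrix (Fin 3) (Fin 3) ℂ // x.trace = 0} × (Fin 3 → ℂ) =>
        ιV p.1 + ιM p.2.1.val + ιVt p.2.2))
    (hMM : ∀ x y : Matrix (Fin 3) (Fin 3) ℂ, x.trace = 0 → y.trace = 0 →
      ⁅ιM x, ιM y⁆ = ιM (x * y - y * x))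
    (hMV : ∀ x : Matrix (Fin 3) (Fin 3) ℂ, x.trace = 0 → ∀ v : Fin 3 → ℂ,
      ⁅ιM x, ιV v⁆ = ιV (x.mulVec v))
    (hMVt : ∀ x : Matrix (Fin 3) (Fin 3) ℂ, x.trace = 0 → ∀ u : Fin 3 → ℂ,
      ⁅ιM x, ιVt u⁆ = ιVt (-(u ᵥ* x)))
    (hVV : ∀ v w : Fin 3 → ℂ, ⁅ιV v, ιV w⁆ = ιVt ((2 : ℂ) • crossProduct v w))
    (hVtVt : ∀ u w : Fin 3 → ℂ, ⁅ιVt u, ιVt w⁆ = ιV ((2 : ℂ) • crossProduct u w))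
    (hVVt : ∀ (v u : Fin 3 → ℂ),
      ⁅ιV v, ιVt u⁆ = ιM (-(3 : ℂ) • vecMulVec v u + (u ⬝ᵥ v) • (1 : Matrix (Fin 3) (Fin 3) ℂ)))
    :
    ∀ i j : Fin 3, i ≠ j →
      ∀ ti tij : Matrix (Fin 3) (Fin 3) ℂ,
        ti = (24 : ℂ)⁻¹ • ((3 : ℂ) • Matrix.single i i 1 - 1) →
        tij = (8 : ℂ)⁻¹ • (Matrix.single i i 1 - Matrix.single j j 1) →
        (∀ d : Fin 3 → ℂ, d 0 + d 1 + d 2 = 0 →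
          killingForm ℂ L (ιM ti) (ιM (Matrix.diagonal d)) = d i ∧
          killingForm ℂ L (ιM tij) (ιM (Matrix.diagonal d)) = d i - d j) ∧
        killingForm ℂ L (ιM ti) (ιM ti) = 1 / 12 ∧
        killingForm ℂ L (ιM tij) (ιM tij) = 1 / 4 ∧
        killingForm ℂ L (ιM tij) (ιM tij) = 3 * killingForm ℂ L (ιM ti) (ιM ti) :=
  stmt14_general ιV ιVt ιM hbij hMM hMV hMVt
end
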